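/- arXiv:1003.3589 — 14 statements merged into one kernel-verified Lean document; each statement's English description precedes it below -/
import Mathlib

section
/- Let n > 1, let f : ℝⁿ → ℝⁿ be a vector field, and let H : ℝⁿ → ℝ be differentiable with f(x) · ∇H(x) = 0 for all x ∈ ℝⁿ (i.e., H is a first integral of f). Then there exists a function S assigning to each point x of the set {x : ∇H(x) ≠ 0} a skew-symmetric n×n real matrix S(x) such that f(x) = S(x) ∇H(x) for every x with ∇H(x) ≠ 0. -/
/-! Where `g = ∇H x` is nonzero, take `S x = (f gᵀ - g fᵀ) / (g ⬝ g)`. It is skew-symmetric, and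
`(f gᵀ - g fᵀ) g = (g ⬝ g) f - (f ⬝ g) g = (g ⬝ g) f` since `f ⬝ g = 0` is the first-integral
condition. -/

namespace Matrix

variable {ι R : Type*} [CommRing R]

def wedge (u v : ι → R) : Matrix ι ι R := vecMulVec u v - vecMulVec v u

theorem transpose_wedge (u v : ι → R) : (wedge u v)ᵀ = -wedge u v := by
  simp [wedge]

theorem wedge_mulVec [Fintype ι] (u v w : ι → R) :
    wedge u v *ᵥ w = (v ⬝ᵥ w) • u - (u ⬝ᵥ w) • v := by
  simp [wedge, sub_mulVec, vecMulVec_mulVec]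

theorem wedge_mulVec_of_dotProduct_eq_zero [Fintype ι] {u v : ι → R} (h : u ⬝ᵥ v = 0) :
    wedge u v *ᵥ v = (v ⬝ᵥ v) • u := by
  rw [wedge_mulVec, h, zero_smul, sub_zero]

end Matrix

open Matrix

theorem stmt_0_general (n : ℕ)
    (f : (Fin n → ℝ) → (Fin n → ℝ)) (H : (Fin n → ℝ) → ℝ)
    (hfirst : ∀ x : Fin n → ℝ, ∑ i, f x i * fderiv ℝ H x (Pi.single i 1) = 0) :
    ∃ S : (Fin n → ℝ) → Matrix (Fin n) (Fin n) ℝ,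
      ∀ x : Fin n → ℝ,
        (fun i => fderiv ℝ H x (Pi.single i 1)) ≠ (0 : Fin n → ℝ) →
          (S x).transpose = -(S x) ∧
          (S x).mulVec (fun i => fderiv ℝ H x (Pi.single i 1)) = f x := by
  set g : (Fin n → ℝ) → (Fin n → ℝ) := fun x i => fderiv ℝ H x (Pi.single i 1)
  refine ⟨fun x => (g x ⬝ᵥ g x)⁻¹ • wedge (f x) (g x), fun x hx => ⟨?_, ?_⟩⟩
  · rw [transpose_smul, transpose_wedge, smul_neg]
  · have hgg : g x ⬝ᵥ g x ≠ 0 := dotProduct_self_eq_zero.not.mpr hx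
    rw [smul_mulVec, wedge_mulVec_of_dotProduct_eq_zero (hfirst x), inv_smul_smul₀ hgg]

/-- McLachlan et al. 1999: if `H` is a differentiable first integral of the vector
field `f` on `ℝⁿ` (`n > 1`), i.e. `f x · ∇H x = 0` for all `x`, then there is a
skew-symmetric matrix function `S` on `{x : ∇H x ≠ 0}` with `f x = S x ∇H x` there. -/
theorem stmt_0 (n : ℕ) (hn : 1 < n)
    (f : (Fin n → ℝ) → (Fin n → ℝ)) (H : (Fin n → ℝ) → ℝ)
    (hH : Differentiable ℝ H)
    (hfirst : ∀ x : Fin n → ℝ, ∑ i, f x i * fderiv ℝ H x (Pi.single i 1) = 0) :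
    ∃ S : (Fin n → ℝ) → Matrix (Fin n) (Fin n) ℝ,
      ∀ x : Fin n → ℝ,
        (fun i => fderiv ℝ H x (Pi.single i 1)) ≠ (0 : Fin n → ℝ) →
          (S x).transpose = -(S x) ∧
          (S x).mulVec (fun i => fderiv ℝ H x (Pi.single i 1)) = f x :=
  stmt_0_general n f H hfirst
end

section
/- Suppose a₁₂ ≠ 0 and a₂₁ ≠ 0, and let A, B : (0,∞) → ℝ be differentiable nowhere-vanishing functions such that for all x₁ > 0 and x₂ > 0: (A'(x₁)/A(x₁))·a₁₂·x₁·x₂ + (B'(x₂)/B(x₂))·a₂₁·x₁·x₂ + F(x₁) + G(x₂) = 0, where F(x₁) = (A'(x₁)/A(x₁))·(b₁x₁ + a₁₁x₁² + e₁) + b₁ + 2a₁₁x₁ + a₂₁x₁ and G(x₂) = (B'(x₂)/B(x₂))·(b₂x₂ + a₂₂x₂² + e₂) + b₂ + 2a₂₂x₂ + a₁₂x₂. Then there exist real constants α, β, γ, c₁ ≠ 0, c₂ ≠ 0 such that A(x₁) = c₁·exp(αx₁/a₁₂)·x₁^(β/a₁₂) for all x₁ > 0 and B(x₂) = c₂·exp(−αx₂/a₂₁)·x₂^(γ/a₂₁)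 for all x₂ > 0. -/
/-!
Write `p x = (A'/A)(x)·a₁₂·x` and `q y = (B'/B)(y)·a₂₁·y`; the hypothesis then reads
`p x₁ · x₂ + q x₂ · x₁ + F x₁ + G x₂ = 0`. Subtracting its instances at `x₂ = 1` and
`x₂ = 2` shows that `p` is affine, and symmetrically that `q` is affine with the opposite
slope. So `A` and `B` solve linear equations `y' = (K + R/x)·y`, whose solutions on `(0,∞)`
are the multiples of `exp (K x) · x^R`.
-/

open Real Set

lemma exists_affine_of_mul_add_mul_add_add_eq_zero {p q F G : ℝ → ℝ}
    (h : ∀ x > (0 : ℝ), ∀ y > (0 : ℝ), p x * y + q y * x + F x + G y = 0) :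
    ∃ α β γ : ℝ,
      (∀ x > (0 : ℝ), p x = α * x + β) ∧ ∀ y > (0 : ℝ), q y = -α * y + γ := by
  have h1 : (1 : ℝ) > 0 := one_pos
  have h2 : (2 : ℝ) > 0 := two_pos
  refine ⟨q 1 - q 2, G 1 - G 2, F 1 - F 2, fun x hx => ?_, fun y hy => ?_⟩
  · linear_combination h x hx 2 h2 - h x hx 1 h1
  · linear_combination h 2 h2 y hy - h 1 h1 y hy + y * (h 1 h1 2 h2 - h 1 h1 1 h1)
      - y * (h 2 h2 2 h2 - h 2 h2 1 h1)

lemma hasDerivAt_exp_mul_mul_rpow (K R : ℝ) {x : ℝ} (hx : 0 < x) :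
    HasDerivAt (fun y => exp (K * y) * y ^ R) ((K + R / x) * (exp (K * x) * x ^ R)) x := by
  have hexp := ((hasDerivAt_id x).const_mul K).exp
  have hpow := hasDerivAt_rpow_const (p := R) (Or.inl hx.ne')
  refine (hexp.mul hpow).congr_deriv ?_
  rw [rpow_sub_one hx.ne', id_eq]
  field_simp

lemma exists_eq_mul_exp_mul_rpow_of_deriv_eq {A : ℝ → ℝ} (K R : ℝ)
    (hA : ∀ x > (0 : ℝ), DifferentiableAt ℝ A x)
    (hder : ∀ x > (0 : ℝ), deriv A x = (K + R / x) * A x) :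
    ∃ c : ℝ, ∀ x > (0 : ℝ), A x = c * (exp (K * x) * x ^ R) := by
  have hg0 : ∀ x > (0 : ℝ), exp (K * x) * x ^ R ≠ 0 := fun x hx => by positivity
  have hquot : ∀ x ∈ Ioi (0 : ℝ), HasDerivAt (fun y => A y / (exp (K * y) * y ^ R)) 0 x := by
    intro x hx
    have hg := hasDerivAt_exp_mul_mul_rpow K R hx
    refine ((hA x hx).hasDerivAt.div hg (hg0 x hx)).congr_deriv ?_
    rw [hder x hx]
    ring
  obtain ⟨c, hc⟩ := isOpen_Ioi.exists_is_const_of_deriv_eq_zero isPreconnected_Ioi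
    (fun x hx => (hquot x hx).differentiableAt.differentiableWithinAt)
    (fun x hx => (hquot x hx).deriv)
  exact ⟨c, fun x hx => (div_eq_iff (hg0 x hx)).1 (hc x hx)⟩

lemma exists_eq_mul_exp_mul_rpow_of_logDeriv_eq {A : ℝ → ℝ} {a k r : ℝ} (ha : a ≠ 0)
    (hA : ∀ x > (0 : ℝ), DifferentiableAt ℝ A x) (hA0 : ∀ x > (0 : ℝ), A x ≠ 0)
    (h : ∀ x > (0 : ℝ), deriv A x / A x * a * x = k * x + r) :
    ∃ c ≠ 0, ∀ x > (0 : ℝ), A x = c * exp (k * x / a) * x ^ (r / a) := by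
  obtain ⟨c, hc⟩ := exists_eq_mul_exp_mul_rpow_of_deriv_eq (k / a) (r / a) hA fun x hx => by
    have hlog := h x hx
    field_simp [hA0 x hx] at hlog ⊢
    linear_combination hlog
  refine ⟨c, fun hc0 => hA0 1 one_pos (by simp [hc 1 one_pos, hc0]), fun x hx => ?_⟩
  rw [hc x hx, div_mul_eq_mul_div]
  ring

/-- Lemma 1 of the paper: the separable integrating factor condition forces
`A` and `B` to be of exponential-power form. -/
theorem stmt_1 (b1 b2 a11 a12 a21 a22 e1 e2 : ℝ)
    (h12 : a12 ≠ 0) (h21 : a21 ≠ 0)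
    (A B : ℝ → ℝ)
    (hA : ∀ x > (0 : ℝ), DifferentiableAt ℝ A x)
    (hB : ∀ x > (0 : ℝ), DifferentiableAt ℝ B x)
    (hA0 : ∀ x > (0 : ℝ), A x ≠ 0)
    (hB0 : ∀ x > (0 : ℝ), B x ≠ 0)
    (heq : ∀ x1 > (0 : ℝ), ∀ x2 > (0 : ℝ),
      (deriv A x1 / A x1) * a12 * x1 * x2 + (deriv B x2 / B x2) * a21 * x1 * x2
        + ((deriv A x1 / A x1) * (b1 * x1 + a11 * x1 ^ 2 + e1)
            + b1 + 2 * a11 * x1 + a21 * x1)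
        + ((deriv B x2 / B x2) * (b2 * x2 + a22 * x2 ^ 2 + e2)
            + b2 + 2 * a22 * x2 + a12 * x2) = 0) :
    ∃ α β γ c1 c2 : ℝ, c1 ≠ 0 ∧ c2 ≠ 0 ∧
      (∀ x1 > (0 : ℝ), A x1 = c1 * Real.exp (α * x1 / a12) * x1 ^ (β / a12)) ∧
      (∀ x2 > (0 : ℝ), B x2 = c2 * Real.exp (-α * x2 / a21) * x2 ^ (γ / a21)) := by
  obtain ⟨α, β, γ, hp, hq⟩ := exists_affine_of_mul_add_mul_add_add_eq_zero
    (p := fun x => deriv A x / A x * a12 * x) (q := fun y => deriv B y / B y * a21 * y)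
    (F := fun x => deriv A x / A x * (b1 * x + a11 * x ^ 2 + e1) + b1 + 2 * a11 * x + a21 * x)
    (G := fun y => deriv B y / B y * (b2 * y + a22 * y ^ 2 + e2) + b2 + 2 * a22 * y + a12 * y)
    fun x hx y hy => by linear_combination heq x hx y hy
  obtain ⟨c1, hc1, hA'⟩ := exists_eq_mul_exp_mul_rpow_of_logDeriv_eq h12 hA hA0 hp
  obtain ⟨c2, hc2, hB'⟩ := exists_eq_mul_exp_mul_rpow_of_logDeriv_eq h21 hB hB0 hq
  exact ⟨α, β, γ, c1, c2, hc1, hc2, hA', hB'⟩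
end

section
/- Suppose the real parameters satisfy b₁ + b₂ = 0, 2a₁₁ + a₂₁ = 0 and a₁₂ + 2a₂₂ = 0 (with e₁, e₂ arbitrary). Then the function H(x₁,x₂) = b₁x₁x₂ + a₁₁x₁²x₂ − a₂₂x₁x₂² + e₁x₂ − e₂x₁ is a first integral of the two-dimensional Lotka–Volterra system with constant terms on all of ℝ²: f₁·∂H/∂x₁ + f₂·∂H/∂x₂ = 0 at every point of ℝ². -/
theorem deriv_quadratic (α β γ x : ℝ) :
    deriv (fun t => α * t ^ 2 + β * t + γ) x = 2 * α * x + β := by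
  have h : HasDerivAt (fun t => α * t ^ 2 + β * t + γ) (α * (2 * x) + β) x := by
    simpa using
      (((hasDerivAt_pow 2 x).const_mul α).add ((hasDerivAt_id x).const_mul β)).add_const γ
  rw [h.deriv]
  ring

/-- Case `e₁, e₂ ≠ 0` (here `e₁,e₂` arbitrary): under the conditions
`b₁+b₂ = 0`, `2a₁₁+a₂₁ = 0`, `a₁₂+2a₂₂ = 0`, the function
`H = b₁x₁x₂ + a₁₁x₁²x₂ − a₂₂x₁x₂² + e₁x₂ − e₂x₁` is a first integral on `ℝ²`. -/
theorem stmt_2 (b1 b2 a11 a12 a21 a22 e1 e2 : ℝ)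
    (h1 : b1 + b2 = 0) (h2 : 2 * a11 + a21 = 0) (h3 : a12 + 2 * a22 = 0) :
    ∀ x1 x2 : ℝ,
      (x1 * (b1 + a11 * x1 + a12 * x2) + e1) *
        deriv (fun t => b1 * t * x2 + a11 * t ^ 2 * x2 - a22 * t * x2 ^ 2
          + e1 * x2 - e2 * t) x1 +
      (x2 * (b2 + a21 * x1 + a22 * x2) + e2) *
        deriv (fun t => b1 * x1 * t + a11 * x1 ^ 2 * t - a22 * x1 * t ^ 2
          + e1 * t - e2 * x1) x2 = 0 := by
  intro x1 x2
  set H₁ := b1 * x2 + 2 * a11 * x1 * x2 - a22 * x2 ^ 2 - e2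
  set H₂ := b1 * x1 + a11 * x1 ^ 2 - 2 * a22 * x1 * x2 + e1
  have hH₁ : deriv (fun t => b1 * t * x2 + a11 * t ^ 2 * x2 - a22 * t * x2 ^ 2
      + e1 * x2 - e2 * t) x1 = H₁ := by
    rw [show (fun t => b1 * t * x2 + a11 * t ^ 2 * x2 - a22 * t * x2 ^ 2 + e1 * x2 - e2 * t) =
        fun t => (a11 * x2) * t ^ 2 + (b1 * x2 - a22 * x2 ^ 2 - e2) * t + e1 * x2 by
      funext t; ring, deriv_quadratic]
    ring
  have hH₂ : deriv (fun t => b1 * x1 * t + a11 * x1 ^ 2 * t - a22 * x1 * t ^ 2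
      + e1 * t - e2 * x1) x2 = H₂ := by
    rw [show (fun t => b1 * x1 * t + a11 * x1 ^ 2 * t - a22 * x1 * t ^ 2 + e1 * t - e2 * x1) =
        fun t => (-(a22 * x1)) * t ^ 2 + (b1 * x1 + a11 * x1 ^ 2 + e1) * t + -(e2 * x1) by
      funext t; ring, deriv_quadratic]
    ring
  rw [hH₁, hH₂]
  linear_combination (x2 * H₂) * h1 + (x1 * x2 * H₂) * h2 + (x1 * x2 * H₁) * h3
end

section
/- Suppose e₂ = 0, a₂₁ ≠ 0, and the real parameters satisfy 2a₁₁a₂₂/a₂₁ − a₂₂ − a₁₂ = 0 and 2b₂a₁₁ − b₁a₂₁ = 0. Set l₂ = −2a₁₁/a₂₁ and suppose l₂ ≠ 0. Then the function H(x₁,x₂) = x₂^(l₂)·(−b₂x₁ − (a₂₁/2)x₁² − a₂₂x₁x₂ + e₁/l₂) is a first integral of the two-dimensional Lotka–Volterra system with constant terms on the open set {(x₁,x₂) ∈ ℝ² : x₂ > 0}. -/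
/-!
Write `P = b₂ + a₂₁x₁ + a₂₂x₂`, so that `f₂ = x₂ P` when `e₂ = 0`, and `Q` for the bracket in `H`.
Then `∂H/∂x₁ = -x₂^{l₂} P` and `x₂ ∂H/∂x₂ = x₂^{l₂} (l₂ Q - a₂₂x₁x₂)`. The two conditions on the
parameters say exactly that `b₁ = -l₂b₂`, `a₁₁ = -l₂a₂₁/2` and `a₁₂ = -(l₂+1)a₂₂`, which make
`l₂ Q - a₂₂x₁x₂ = f₁`; hence `f₁ ∂H/∂x₁ + f₂ ∂H/∂x₂ = x₂^{l₂} P (-f₁ + f₁) = 0`.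
-/

namespace LotkaVolterra

theorem coeffs_eq_of_conditions {b1 b2 a11 a12 a21 a22 l : ℝ} (h21 : a21 ≠ 0)
    (hc1 : 2 * a11 * a22 / a21 - a22 - a12 = 0) (hc2 : 2 * b2 * a11 - b1 * a21 = 0)
    (hl : l = -2 * a11 / a21) :
    b1 = -l * b2 ∧ a11 = -l * a21 / 2 ∧ a12 = -(l + 1) * a22 := by
  have hla : l * a21 = -2 * a11 := by rw [hl]; field_simp
  have hc1' : 2 * a11 * a22 - a22 * a21 - a12 * a21 = 0 := by
    field_simp at hc1; linarith
  refine ⟨?_, by linarith, ?_⟩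
  · exact mul_right_cancel₀ h21 (by linear_combination -hc2 + b2 * hla)
  · exact mul_right_cancel₀ h21 (by linear_combination -hc1' + a22 * hla)

theorem exponent_mul_sub_eq_fst_field {b1 b2 a11 a12 a21 a22 e1 l : ℝ} (hl : l ≠ 0)
    (hb1 : b1 = -l * b2) (ha11 : a11 = -l * a21 / 2) (ha12 : a12 = -(l + 1) * a22)
    (x y : ℝ) :
    l * (-b2 * x - a21 / 2 * x ^ 2 - a22 * x * y + e1 / l) - a22 * x * y =
      x * (b1 + a11 * x + a12 * y) + e1 := by
  subst hb1 ha11 ha12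
  field_simp
  ring

theorem hasDerivAt_firstIntegral_fst (b2 a21 a22 c l x y : ℝ) :
    HasDerivAt (fun t => y ^ l * (-b2 * t - a21 / 2 * t ^ 2 - a22 * t * y + c))
      (-(y ^ l * (b2 + a21 * x + a22 * y))) x := by
  have hQ : HasDerivAt (fun t => -b2 * t - a21 / 2 * t ^ 2 - a22 * t * y + c)
      (-b2 * 1 - a21 / 2 * (2 * x ^ (2 - 1)) - a22 * 1 * y) x :=
    ((((hasDerivAt_id x).const_mul (-b2)).sub ((hasDerivAt_pow 2 x).const_mul (a21 / 2))).sub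
      (((hasDerivAt_id x).const_mul a22).mul_const y)).add_const c
  exact (hQ.const_mul (y ^ l)).congr_deriv (by ring)

theorem hasDerivAt_firstIntegral_snd (b2 a21 a22 c l x : ℝ) {y : ℝ} (hy : 0 < y) :
    HasDerivAt (fun t => t ^ l * (-b2 * x - a21 / 2 * x ^ 2 - a22 * x * t + c))
      (y ^ (l - 1) * (l * (-b2 * x - a21 / 2 * x ^ 2 - a22 * x * y + c) - a22 * x * y)) y := by
  have hQ : HasDerivAt (fun t => -b2 * x - a21 / 2 * x ^ 2 - a22 * x * t + c) (0 - a22 * x * 1) y :=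
    (((hasDerivAt_const y (-b2 * x - a21 / 2 * x ^ 2)).sub
      ((hasDerivAt_id y).const_mul (a22 * x))).add_const c)
  refine ((Real.hasDerivAt_rpow_const (Or.inl hy.ne')).fun_mul hQ).congr_deriv ?_
  rw [Real.rpow_sub_one hy.ne']
  field_simp
  ring

end LotkaVolterra

/-- Case `e₁ ≠ 0, e₂ = 0` with `l₂ = −2a₁₁/a₂₁ ≠ 0`:
`H = x₂^{l₂}(−b₂x₁ − (a₂₁/2)x₁² − a₂₂x₁x₂ + e₁/l₂)` is a first integral on `{x₂ > 0}`. -/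
theorem stmt_3 (b1 b2 a11 a12 a21 a22 e1 e2 l2 : ℝ)
    (he2 : e2 = 0) (h21 : a21 ≠ 0)
    (hc1 : 2 * a11 * a22 / a21 - a22 - a12 = 0)
    (hc2 : 2 * b2 * a11 - b1 * a21 = 0)
    (hl2 : l2 = -2 * a11 / a21) (hl2ne : l2 ≠ 0) :
    ∀ x1 x2 : ℝ, 0 < x2 →
      (x1 * (b1 + a11 * x1 + a12 * x2) + e1) *
        deriv (fun t => x2 ^ l2 *
          (-b2 * t - a21 / 2 * t ^ 2 - a22 * t * x2 + e1 / l2)) x1 +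
      (x2 * (b2 + a21 * x1 + a22 * x2) + e2) *
        deriv (fun t => t ^ l2 *
          (-b2 * x1 - a21 / 2 * x1 ^ 2 - a22 * x1 * t + e1 / l2)) x2 = 0 := by
  intro x1 x2 hx2
  obtain ⟨hb1, ha11, ha12⟩ := LotkaVolterra.coeffs_eq_of_conditions h21 hc1 hc2 hl2
  rw [(LotkaVolterra.hasDerivAt_firstIntegral_fst b2 a21 a22 (e1 / l2) l2 x1 x2).deriv,
    (LotkaVolterra.hasDerivAt_firstIntegral_snd b2 a21 a22 (e1 / l2) l2 x1 hx2).deriv,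
    LotkaVolterra.exponent_mul_sub_eq_fst_field (e1 := e1) hl2ne hb1 ha11 ha12, he2,
    Real.rpow_sub_one hx2.ne']
  field_simp
  ring
end

section
/- Suppose e₂ = 0, a₂₁ ≠ 0, a₁₁ = 0, b₁ = 0 and a₁₂ + a₂₂ = 0 (these are the conditions 2a₁₁a₂₂/a₂₁ − a₂₂ − a₁₂ = 0 and 2b₂a₁₁ − b₁a₂₁ = 0 in the case l₂ = −2a₁₁/a₂₁ = 0). Then the function H(x₁,x₂) = −b₂x₁ − (a₂₁/2)x₁² − a₂₂x₁x₂ + e₁·ln x₂ is a first integral of the two-dimensional Lotka–Volterra system with constant terms on the open set {(x₁,x₂) ∈ ℝ² : x₂ > 0}. -/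
/-! With `a₁₁ = b₁ = e₂ = 0` and `a₁₂ = -a₂₂` one has `∂H/∂x₁ = -f₂/x₂` and `∂H/∂x₂ = f₁/x₂`,
so `1/x₂` is an integrating factor making the system Hamiltonian with Hamiltonian `H`, and
`f₁ ∂H/∂x₁ + f₂ ∂H/∂x₂ = (-f₁f₂ + f₂f₁)/x₂ = 0`. -/

lemma hasDerivAt_firstIntegral_fst (b2 a21 a22 e1 x1 x2 : ℝ) :
    HasDerivAt (fun t => -b2 * t - a21 / 2 * t ^ 2 - a22 * t * x2 + e1 * Real.log x2)
      (-(b2 + a21 * x1 + a22 * x2)) x1 := by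
  refine ((((hasDerivAt_id' x1).const_mul (-b2)).sub
    (((hasDerivAt_id' x1).pow 2).const_mul (a21 / 2))).sub
    (((hasDerivAt_id' x1).const_mul a22).mul_const x2)).add_const (e1 * Real.log x2)
    |>.congr_deriv ?_
  ring

lemma hasDerivAt_firstIntegral_snd (b2 a21 a22 e1 x1 : ℝ) {x2 : ℝ} (hx2 : x2 ≠ 0) :
    HasDerivAt (fun t => -b2 * x1 - a21 / 2 * x1 ^ 2 - a22 * x1 * t + e1 * Real.log t)
      (e1 / x2 - a22 * x1) x2 := by
  refine (((hasDerivAt_id' x2).const_mul (a22 * x1)).const_sub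
    (-b2 * x1 - a21 / 2 * x1 ^ 2)).add ((Real.hasDerivAt_log hx2).const_mul e1)
    |>.congr_deriv ?_
  ring

theorem stmt_4_general (b1 b2 a11 a12 a21 a22 e1 e2 : ℝ)
    (he2 : e2 = 0) (h11 : a11 = 0) (hb1 : b1 = 0)
    (hsum : a12 + a22 = 0) :
    ∀ x1 x2 : ℝ, 0 < x2 →
      (x1 * (b1 + a11 * x1 + a12 * x2) + e1) *
        deriv (fun t => -b2 * t - a21 / 2 * t ^ 2 - a22 * t * x2
          + e1 * Real.log x2) x1 +
      (x2 * (b2 + a21 * x1 + a22 * x2) + e2) *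
        deriv (fun t => -b2 * x1 - a21 / 2 * x1 ^ 2 - a22 * x1 * t
          + e1 * Real.log t) x2 = 0 := by
  intro x1 x2 hx2
  set f1 := x1 * (b1 + a11 * x1 + a12 * x2) + e1
  set f2 := x2 * (b2 + a21 * x1 + a22 * x2) + e2
  have hH1 : -(b2 + a21 * x1 + a22 * x2) = -f2 / x2 := by
    rw [eq_div_iff hx2.ne']
    simp only [f2, he2]
    ring
  have hH2 : e1 / x2 - a22 * x1 = f1 / x2 := by
    have ha12 : a12 = -a22 := by linarith
    rw [eq_div_iff hx2.ne']
    simp only [f1, h11, hb1, ha12]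
    field_simp
    ring
  rw [(hasDerivAt_firstIntegral_fst b2 a21 a22 e1 x1 x2).deriv,
    (hasDerivAt_firstIntegral_snd b2 a21 a22 e1 x1 hx2.ne').deriv, hH1, hH2]
  ring

/-- Case `e₁ ≠ 0, e₂ = 0` with `l₂ = 0`:
`H = −b₂x₁ − (a₂₁/2)x₁² − a₂₂x₁x₂ + e₁ ln x₂` is a first integral on `{x₂ > 0}`. -/
theorem stmt_4 (b1 b2 a11 a12 a21 a22 e1 e2 : ℝ)
    (he2 : e2 = 0) (h21 : a21 ≠ 0) (h11 : a11 = 0) (hb1 : b1 = 0)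
    (hsum : a12 + a22 = 0) :
    ∀ x1 x2 : ℝ, 0 < x2 →
      (x1 * (b1 + a11 * x1 + a12 * x2) + e1) *
        deriv (fun t => -b2 * t - a21 / 2 * t ^ 2 - a22 * t * x2
          + e1 * Real.log x2) x1 +
      (x2 * (b2 + a21 * x1 + a22 * x2) + e2) *
        deriv (fun t => -b2 * x1 - a21 / 2 * x1 ^ 2 - a22 * x1 * t
          + e1 * Real.log t) x2 = 0 :=
  stmt_4_general b1 b2 a11 a12 a21 a22 e1 e2 he2 h11 hb1 hsum
end

section
/- Suppose e₁ = e₂ = 0, a₁₁a₂₂ − a₁₂a₂₁ ≠ 0, and the parameters satisfy the solvability condition b₁a₂₂(a₂₁ − a₁₁) + b₂a₁₁(a₁₂ − a₂₂) = 0. Set l₁ = a₂₂(a₂₁ − a₁₁)/(a₁₁a₂₂ − a₁₂a₂₁) and l₂ = a₁₁(a₁₂ − a₂₂)/(a₁₁a₂₂ − a₁₂a₂₁), and suppose l₁ ≠ 0 and l₂ ≠ 0. Then the function H(x₁,x₂) = x₁^(l₁)·x₂^(l₂)·(b₁/l₂ + (a₁₁/l₂)x₁ − (a₂₂/l₁)x₂)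 is a first integral of the two-dimensional Lotka–Volterra system with constant terms on the open positive quadrant {(x₁,x₂) : x₁ > 0, x₂ > 0}. -/
/-!
Write `fᵢ = xᵢ Lᵢ` with `Lᵢ = bᵢ + aᵢ₁x₁ + aᵢ₂x₂` and `H = x₁^l₁ x₂^l₂ P` with
`P = b₁/l₂ + (a₁₁/l₂)x₁ − (a₂₂/l₁)x₂`. Along the field, the generalized monomial
`x₁^l₁ x₂^l₂` is multiplied by the cofactor `l₁L₁ + l₂L₂`, and the affine factor `P` has
derivative `(a₁₁x₁ + a₂₂x₂) P`. By Cramer's rule the exponents solve `Aᵀl = −(a₁₁, a₂₂)`, and the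
solvability condition says `b·l = 0`; together they give `l₁L₁ + l₂L₂ = −(a₁₁x₁ + a₂₂x₂)`, so the
two contributions cancel.
-/

open Real

section Exponents

variable {b1 b2 a11 a12 a21 a22 l1 l2 : ℝ}

theorem exponents_transpose_mul_eq_neg_diag (hdet : a11 * a22 - a12 * a21 ≠ 0)
    (hl1 : l1 = a22 * (a21 - a11) / (a11 * a22 - a12 * a21))
    (hl2 : l2 = a11 * (a12 - a22) / (a11 * a22 - a12 * a21)) :
    a11 * l1 + a21 * l2 = -a11 ∧ a12 * l1 + a22 * l2 = -a22 := by
  rw [eq_div_iff hdet] at hl1 hl2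
  constructor <;> apply mul_right_cancel₀ hdet
  · linear_combination a11 * hl1 + a21 * hl2
  · linear_combination a12 * hl1 + a22 * hl2

theorem constants_dot_exponents_eq_zero (hdet : a11 * a22 - a12 * a21 ≠ 0)
    (hsolv : b1 * a22 * (a21 - a11) + b2 * a11 * (a12 - a22) = 0)
    (hl1 : l1 = a22 * (a21 - a11) / (a11 * a22 - a12 * a21))
    (hl2 : l2 = a11 * (a12 - a22) / (a11 * a22 - a12 * a21)) :
    b1 * l1 + b2 * l2 = 0 := by
  rw [eq_div_iff hdet] at hl1 hl2
  apply mul_right_cancel₀ hdet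
  linear_combination b1 * hl1 + b2 * hl2 + hsolv

end Exponents

section PartialDerivatives

variable {l1 l2 c0 c1 c2 x y : ℝ}

theorem deriv_rpow_mul_rpow_mul_affine_fst (hx : x ≠ 0) :
    deriv (fun t => t ^ l1 * y ^ l2 * (c0 + c1 * t - c2 * y)) x =
      x ^ l1 * y ^ l2 * (l1 * (c0 + c1 * x - c2 * y) / x + c1) := by
  have hmono : HasDerivAt (fun t : ℝ => t ^ l1 * y ^ l2) (l1 * x ^ (l1 - 1) * y ^ l2) x :=
    (hasDerivAt_rpow_const (Or.inl hx)).mul_const _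
  have haff : HasDerivAt (fun t : ℝ => c0 + c1 * t - c2 * y) c1 x := by
    simpa using (((hasDerivAt_id x).const_mul c1).const_add c0).sub_const (c2 * y)
  have hH : HasDerivAt (fun t => t ^ l1 * y ^ l2 * (c0 + c1 * t - c2 * y))
      (l1 * x ^ (l1 - 1) * y ^ l2 * (c0 + c1 * x - c2 * y) + x ^ l1 * y ^ l2 * c1) x :=
    hmono.mul haff
  rw [hH.deriv, rpow_sub_one hx]
  field_simp

theorem deriv_rpow_mul_rpow_mul_affine_snd (hy : y ≠ 0) :
    deriv (fun t => x ^ l1 * t ^ l2 * (c0 + c1 * x - c2 * t)) y =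
      x ^ l1 * y ^ l2 * (l2 * (c0 + c1 * x - c2 * y) / y - c2) := by
  have hmono : HasDerivAt (fun t : ℝ => x ^ l1 * t ^ l2) (x ^ l1 * (l2 * y ^ (l2 - 1))) y :=
    (hasDerivAt_rpow_const (Or.inl hy)).const_mul _
  have haff : HasDerivAt (fun t : ℝ => c0 + c1 * x - c2 * t) (-c2) y := by
    simpa using ((hasDerivAt_id y).const_mul c2).const_sub (c0 + c1 * x)
  have hH : HasDerivAt (fun t => x ^ l1 * t ^ l2 * (c0 + c1 * x - c2 * t))
      (x ^ l1 * (l2 * y ^ (l2 - 1)) * (c0 + c1 * x - c2 * y) + x ^ l1 * y ^ l2 * -c2) y :=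
    hmono.mul haff
  rw [hH.deriv, rpow_sub_one hy]
  field_simp
  ring

end PartialDerivatives

section Cofactors

variable {b1 b2 a11 a12 a21 a22 l1 l2 : ℝ}

theorem monomial_cofactor_eq (hA : a11 * l1 + a21 * l2 = -a11 ∧ a12 * l1 + a22 * l2 = -a22)
    (hb : b1 * l1 + b2 * l2 = 0) (x y : ℝ) :
    l1 * (b1 + a11 * x + a12 * y) + l2 * (b2 + a21 * x + a22 * y) = -(a11 * x + a22 * y) := by
  linear_combination hb + x * hA.1 + y * hA.2

theorem affine_lieDeriv_eq (hl1 : l1 ≠ 0) (hl2 : l2 ≠ 0)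
    (hA : a11 * l1 + a21 * l2 = -a11 ∧ a12 * l1 + a22 * l2 = -a22)
    (hb : b1 * l1 + b2 * l2 = 0) (x y : ℝ) :
    x * (b1 + a11 * x + a12 * y) * (a11 / l2) - y * (b2 + a21 * x + a22 * y) * (a22 / l1) =
      (a11 * x + a22 * y) * (b1 / l2 + a11 / l2 * x - a22 / l1 * y) := by
  field_simp
  linear_combination (-a22 * y) * hb - (a22 * x * y) * hA.1 + (a11 * x * y) * hA.2

end Cofactors

/-- Case `e₁ = e₂ = 0`, `A` of maximal rank, `l₁, l₂ ≠ 0`: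
`H = x₁^{l₁} x₂^{l₂} (b₁/l₂ + (a₁₁/l₂)x₁ − (a₂₂/l₁)x₂)` is a first integral on the
positive quadrant. -/
theorem stmt_5 (b1 b2 a11 a12 a21 a22 e1 e2 l1 l2 : ℝ)
    (he1 : e1 = 0) (he2 : e2 = 0)
    (hdet : a11 * a22 - a12 * a21 ≠ 0)
    (hsolv : b1 * a22 * (a21 - a11) + b2 * a11 * (a12 - a22) = 0)
    (hl1 : l1 = a22 * (a21 - a11) / (a11 * a22 - a12 * a21))
    (hl2 : l2 = a11 * (a12 - a22) / (a11 * a22 - a12 * a21))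
    (hl1ne : l1 ≠ 0) (hl2ne : l2 ≠ 0) :
    ∀ x1 x2 : ℝ, 0 < x1 → 0 < x2 →
      (x1 * (b1 + a11 * x1 + a12 * x2) + e1) *
        deriv (fun t => t ^ l1 * x2 ^ l2 *
          (b1 / l2 + a11 / l2 * t - a22 / l1 * x2)) x1 +
      (x2 * (b2 + a21 * x1 + a22 * x2) + e2) *
        deriv (fun t => x1 ^ l1 * t ^ l2 *
          (b1 / l2 + a11 / l2 * x1 - a22 / l1 * t)) x2 = 0 := by
  intro x1 x2 hx1 hx2
  have hA := exponents_transpose_mul_eq_neg_diag hdet hl1 hl2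
  have hb := constants_dot_exponents_eq_zero hdet hsolv hl1 hl2
  rw [he1, he2, deriv_rpow_mul_rpow_mul_affine_fst hx1.ne',
    deriv_rpow_mul_rpow_mul_affine_snd hx2.ne']
  set P := b1 / l2 + a11 / l2 * x1 - a22 / l1 * x2
  calc _ = x1 ^ l1 * x2 ^ l2 *
        ((l1 * (b1 + a11 * x1 + a12 * x2) + l2 * (b2 + a21 * x1 + a22 * x2)) * P +
          (x1 * (b1 + a11 * x1 + a12 * x2) * (a11 / l2) -
            x2 * (b2 + a21 * x1 + a22 * x2) * (a22 / l1))) := by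
        field_simp
        ring
    _ = 0 := by
        rw [monomial_cofactor_eq hA hb, affine_lieDeriv_eq hl1ne hl2ne hA hb]
        ring
end

section
/- Suppose e₁ = e₂ = 0, b₂ = 0, a₂₂ = 0, a₁₂ ≠ 0 and a₂₁ ≠ 0. Set l₂ = −a₁₁/a₂₁ and suppose l₂ ≠ 0 and l₂ ≠ −1. Then the function H(x₁,x₂) = x₂^(l₂)·(b₁/l₂ + (a₁₁/l₂)x₁ + (a₁₂/(l₂+1))x₂) is a first integral of the two-dimensional Lotka–Volterra system with constant terms on the open set {(x₁,x₂) ∈ ℝ² : x₂ > 0}. -/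
/-!
Along the flow, `x₂ ∂H/∂x₂ = x₂^{l₂} (b₁ + a₁₁x₁ + a₁₂x₂)` by Euler's identity for
`t ↦ t^{l₂}(c + k t)`, while `∂H/∂x₁ = x₂^{l₂} a₁₁/l₂ = -a₂₁ x₂^{l₂}`. Hence both terms of
`f₁ ∂H/∂x₁ + f₂ ∂H/∂x₂` equal `± a₂₁ x₁ x₂^{l₂} (b₁ + a₁₁x₁ + a₁₂x₂)` and cancel.
-/

open Real

theorem deriv_const_mul_affine (a b k c x : ℝ) :
    deriv (fun t => a * (b + k * t + c)) x = a * k := by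
  have h : HasDerivAt (fun t => b + k * t + c) k x := by
    simpa using ((hasDerivAt_id x).const_mul k).const_add b |>.add_const c
  exact (h.const_mul a).deriv

theorem mul_deriv_rpow_mul_affine {x : ℝ} (hx : 0 < x) (l c k : ℝ) :
    x * deriv (fun t => t ^ l * (c + k * t)) x = x ^ l * (l * c + (l + 1) * k * x) := by
  have hpow : HasDerivAt (fun t => t ^ l) (l * x ^ (l - 1)) x := by
    simpa using hasDerivAt_rpow_const (p := l) (Or.inl hx.ne')
  have haff : HasDerivAt (fun t => c + k * t) k x := by
    simpa using ((hasDerivAt_id x).const_mul k).const_add c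
  have hderiv : HasDerivAt (fun t => t ^ l * (c + k * t))
      (l * x ^ (l - 1) * (c + k * x) + x ^ l * k) x :=
    hpow.mul haff
  rw [hderiv.deriv, rpow_sub_one hx.ne']
  field_simp
  ring

theorem stmt_6_general (b1 b2 a11 a12 a21 a22 e1 e2 l2 : ℝ)
    (he1 : e1 = 0) (he2 : e2 = 0) (hb2 : b2 = 0) (h22 : a22 = 0)
    (h21 : a21 ≠ 0)
    (hl2 : l2 = -a11 / a21) (hl2ne : l2 ≠ 0) (hl2ne' : l2 ≠ -1) :
    ∀ x1 x2 : ℝ, 0 < x2 →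
      (x1 * (b1 + a11 * x1 + a12 * x2) + e1) *
        deriv (fun t => x2 ^ l2 *
          (b1 / l2 + a11 / l2 * t + a12 / (l2 + 1) * x2)) x1 +
      (x2 * (b2 + a21 * x1 + a22 * x2) + e2) *
        deriv (fun t => t ^ l2 *
          (b1 / l2 + a11 / l2 * x1 + a12 / (l2 + 1) * t)) x2 = 0 := by
  intro x1 x2 hx2
  have hl2succ : l2 + 1 ≠ 0 := fun h => hl2ne' (eq_neg_of_add_eq_zero_left h)
  have ha11_div : a11 / l2 = -a21 := by
    rw [div_eq_iff hl2ne, hl2]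
    field_simp
  have heuler := mul_deriv_rpow_mul_affine hx2 l2 (b1 / l2 + a11 / l2 * x1) (a12 / (l2 + 1))
  have hG : l2 * (b1 / l2 + a11 / l2 * x1) + (l2 + 1) * (a12 / (l2 + 1)) * x2 =
      b1 + a11 * x1 + a12 * x2 := by
    field_simp
  rw [hG] at heuler
  rw [deriv_const_mul_affine]
  subst he1 he2 hb2 h22
  linear_combination a21 * x1 * heuler + x1 * (b1 + a11 * x1 + a12 * x2) * x2 ^ l2 * ha11_div

/-- Case `e₁ = e₂ = 0`, `l₁ = 0`, `l₂ ≠ 0`, `l₂ ≠ −1`: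
`H = x₂^{l₂}(b₁/l₂ + (a₁₁/l₂)x₁ + (a₁₂/(l₂+1))x₂)` is a first integral on `{x₂ > 0}`. -/
theorem stmt_6 (b1 b2 a11 a12 a21 a22 e1 e2 l2 : ℝ)
    (he1 : e1 = 0) (he2 : e2 = 0) (hb2 : b2 = 0) (h22 : a22 = 0)
    (h12 : a12 ≠ 0) (h21 : a21 ≠ 0)
    (hl2 : l2 = -a11 / a21) (hl2ne : l2 ≠ 0) (hl2ne' : l2 ≠ -1) :
    ∀ x1 x2 : ℝ, 0 < x2 →
      (x1 * (b1 + a11 * x1 + a12 * x2) + e1) *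
        deriv (fun t => x2 ^ l2 *
          (b1 / l2 + a11 / l2 * t + a12 / (l2 + 1) * x2)) x1 +
      (x2 * (b2 + a21 * x1 + a22 * x2) + e2) *
        deriv (fun t => t ^ l2 *
          (b1 / l2 + a11 / l2 * x1 + a12 / (l2 + 1) * t)) x2 = 0 :=
  stmt_6_general b1 b2 a11 a12 a21 a22 e1 e2 l2 he1 he2 hb2 h22 h21 hl2 hl2ne hl2ne'
end

section
/- Suppose e₁ = e₂ = 0, a₂₁ ≠ 0, and there is λ ∈ ℝ, λ ≠ 0, with (a₁₁, a₁₂, b₁) = λ·(a₂₁, a₂₂, b₂), so that λ = a₁₁/a₂₁. Then the function H(x₁,x₂) = x₁·x₂^(−λ) is a first integral of the two-dimensional Lotka–Volterra system with constant terms on the open positive quadrant {(x₁,x₂) : x₁ > 0, x₂ > 0}. -/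
/-!
For `e₁ = e₂ = 0` the field is `fᵢ = xᵢ Pᵢ` with linear per-capita rates `Pᵢ`, and along such a field
the monomial `H = x₁ x₂^(-λ)` has Lie derivative `H (P₁ - λ P₂)`. The proportionality
`(a₁₁, a₁₂, b₁) = λ (a₂₁, a₂₂, b₂)` says exactly that `P₁ = λ P₂`.
-/

theorem hasDerivAt_const_mul_rpow_const {c r x : ℝ} (hx : x ≠ 0) :
    HasDerivAt (fun t => c * t ^ r) (c * (r * x ^ (r - 1))) x :=
  (Real.hasDerivAt_rpow_const (Or.inl hx)).const_mul c

theorem lieDeriv_mul_rpow_neg (x1 x2 lam P1 P2 : ℝ) (hx2 : x2 ≠ 0) :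
    x1 * P1 * deriv (fun t => t * x2 ^ (-lam)) x1 +
      x2 * P2 * deriv (fun t => x1 * t ^ (-lam)) x2 =
      x1 * x2 ^ (-lam) * (P1 - lam * P2) := by
  have hpow : x2 ^ (-lam) = x2 ^ (-lam - 1) * x2 := by
    rw [← Real.rpow_add_one hx2, sub_add_cancel]
  rw [deriv_mul_const_field', deriv_id'', (hasDerivAt_const_mul_rpow_const hx2).deriv, hpow]
  ring

theorem stmt_9_general (b1 b2 a11 a12 a21 a22 e1 e2 lam : ℝ)
    (he1 : e1 = 0) (he2 : e2 = 0)
    (h1 : a11 = lam * a21) (h2 : a12 = lam * a22) (h3 : b1 = lam * b2) :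
    ∀ x1 x2 : ℝ, 0 < x1 → 0 < x2 →
      (x1 * (b1 + a11 * x1 + a12 * x2) + e1) *
        deriv (fun t => t * x2 ^ (-lam)) x1 +
      (x2 * (b2 + a21 * x1 + a22 * x2) + e2) *
        deriv (fun t => x1 * t ^ (-lam)) x2 = 0 := by
  intro x1 x2 _ hx2
  have hP : b1 + a11 * x1 + a12 * x2 = lam * (b2 + a21 * x1 + a22 * x2) := by
    rw [h1, h2, h3]; ring
  rw [he1, he2, add_zero, add_zero, lieDeriv_mul_rpow_neg x1 x2 lam _ _ hx2.ne', hP, sub_self,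
    mul_zero]

/-- Case `e₁ = e₂ = 0` with rank-one matrix `(a₁₁,a₁₂,b₁) = λ(a₂₁,a₂₂,b₂)`:
`H = x₁ x₂^{−λ}` is a first integral on the positive quadrant. -/
theorem stmt_9 (b1 b2 a11 a12 a21 a22 e1 e2 lam : ℝ)
    (he1 : e1 = 0) (he2 : e2 = 0) (h21 : a21 ≠ 0) (hlam : lam ≠ 0)
    (h1 : a11 = lam * a21) (h2 : a12 = lam * a22) (h3 : b1 = lam * b2) :
    ∀ x1 x2 : ℝ, 0 < x1 → 0 < x2 →
      (x1 * (b1 + a11 * x1 + a12 * x2) + e1) *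
        deriv (fun t => t * x2 ^ (-lam)) x1 +
      (x2 * (b2 + a21 * x1 + a22 * x2) + e2) *
        deriv (fun t => x1 * t ^ (-lam)) x2 = 0 :=
  stmt_9_general b1 b2 a11 a12 a21 a22 e1 e2 lam he1 he2 h1 h2 h3
end

section
/- Suppose a₁₁ = a₂₂ = 0, a₁₂·a₂₁ ≠ 0, b₁ + b₂ = 0 and e₂a₁₂ − e₁a₂₁ = 0. Then the function H(x₁,x₂) = a₂₁x₁ − a₁₂x₂ + b₂·ln(e₁ + a₁₂x₁x₂) is a first integral of the two-dimensional Lotka–Volterra system with constant terms on the open set {(x₁,x₂) ∈ ℝ² : e₁ + a₁₂x₁x₂ > 0}. -/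
/-!
Write `D = e₁ + a₁₂x₁x₂`. The hypotheses give `f₁ = D - b₂x₁` and `a₁₂f₂ = a₂₁D + a₁₂b₂x₂`,
so the gradient of `H` is `(a₁₂ / D) • (f₂, -f₁)`: the system is Hamiltonian with integrating
factor `D / a₁₂`, and `f₁ ∂₁H + f₂ ∂₂H = (a₁₂ / D)(f₁f₂ - f₂f₁) = 0`.
-/

theorem hasDerivAt_mul_add_add_mul_log {c k b p q x : ℝ} (hx : p + q * x ≠ 0) :
    HasDerivAt (fun t => c * t + k + b * Real.log (p + q * t)) (c + b * q / (p + q * x)) x := by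
  have hlin : HasDerivAt (fun t => c * t + k) c x := by
    simpa using ((hasDerivAt_id x).const_mul c).add_const k
  have harg : HasDerivAt (fun t => p + q * t) q x := by
    simpa using ((hasDerivAt_id x).const_mul q).const_add p
  simpa [mul_div_assoc] using hlin.fun_add ((harg.log hx).const_mul b)

theorem deriv_firstIntegral_fst {a12 a21 b2 e1 x1 x2 : ℝ} (hD : e1 + a12 * x1 * x2 ≠ 0) :
    deriv (fun t => a21 * t - a12 * x2 + b2 * Real.log (e1 + a12 * t * x2)) x1
      = a21 + b2 * (a12 * x2) / (e1 + a12 * x1 * x2) := by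
  have hfun : (fun t => a21 * t - a12 * x2 + b2 * Real.log (e1 + a12 * t * x2))
      = fun t => a21 * t + -(a12 * x2) + b2 * Real.log (e1 + a12 * x2 * t) := by
    funext t; ring_nf
  rw [hfun, (hasDerivAt_mul_add_add_mul_log (by rwa [mul_right_comm])).deriv, mul_right_comm]

theorem deriv_firstIntegral_snd {a12 a21 b2 e1 x1 x2 : ℝ} (hD : e1 + a12 * x1 * x2 ≠ 0) :
    deriv (fun t => a21 * x1 - a12 * t + b2 * Real.log (e1 + a12 * x1 * t)) x2
      = -a12 + b2 * (a12 * x1) / (e1 + a12 * x1 * x2) := by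
  have hfun : (fun t => a21 * x1 - a12 * t + b2 * Real.log (e1 + a12 * x1 * t))
      = fun t => -a12 * t + a21 * x1 + b2 * Real.log (e1 + a12 * x1 * t) := by
    funext t; ring
  rw [hfun, (hasDerivAt_mul_add_add_mul_log hD).deriv]

/-- Case `α ≠ 0`: under `a₁₁ = a₂₂ = 0`, `a₁₂a₂₁ ≠ 0`, `b₁ + b₂ = 0`,
`e₂a₁₂ − e₁a₂₁ = 0`, the function
`H = a₂₁x₁ − a₁₂x₂ + b₂ ln(e₁ + a₁₂x₁x₂)` is a first integral on
`{e₁ + a₁₂x₁x₂ > 0}`. -/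
theorem stmt_10 (b1 b2 a11 a12 a21 a22 e1 e2 : ℝ)
    (h11 : a11 = 0) (h22 : a22 = 0) (hprod : a12 * a21 ≠ 0)
    (hb : b1 + b2 = 0) (he : e2 * a12 - e1 * a21 = 0) :
    ∀ x1 x2 : ℝ, 0 < e1 + a12 * x1 * x2 →
      (x1 * (b1 + a11 * x1 + a12 * x2) + e1) *
        deriv (fun t => a21 * t - a12 * x2
          + b2 * Real.log (e1 + a12 * t * x2)) x1 +
      (x2 * (b2 + a21 * x1 + a22 * x2) + e2) *
        deriv (fun t => a21 * x1 - a12 * t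
          + b2 * Real.log (e1 + a12 * x1 * t)) x2 = 0 := by
  intro x1 x2 hpos
  have hD := hpos.ne'
  have ha12 : a12 ≠ 0 := left_ne_zero_of_mul hprod
  rw [deriv_firstIntegral_fst hD, deriv_firstIntegral_snd hD]
  set D := e1 + a12 * x1 * x2
  set f1 := x1 * (b1 + a11 * x1 + a12 * x2) + e1
  set f2 := x2 * (b2 + a21 * x1 + a22 * x2) + e2
  have hgrad1 : a21 + b2 * (a12 * x2) / D = a12 / D * f2 := by
    field_simp
    simp only [f2, D, h22]
    linear_combination -he
  have hgrad2 : -a12 + b2 * (a12 * x1) / D = -(a12 / D * f1) := by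
    field_simp
    simp only [f1, D, h11]
    linear_combination x1 * hb
  rw [hgrad1, hgrad2]
  ring
end

section
/- Suppose the real parameters satisfy b₁ + b₂ = 0, 2a₁₁ + a₂₁ = 0, 2a₂₂ + a₁₂ = 0 and a₁₃ = a₂₃ = 0 (with e₁, e₂, e₃ arbitrary). Then the function H(x₁,x₂,x₃) = b₁x₁x₂ + a₁₁x₁²x₂ − a₂₂x₁x₂² + e₁x₂ − e₂x₁ is a first integral of the three-dimensional Lotka–Volterra system with constant terms on all of ℝ³. -/
/-!
With these parameters the `(x₁, x₂)`-part of the system is Hamiltonian with Hamiltonian `H`: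
`f₁ = ∂H/∂x₂` and `f₂ = -∂H/∂x₁`, while `H` does not depend on `x₃`.  Hence
`f₁ ∂H/∂x₁ + f₂ ∂H/∂x₂ + f₃ ∂H/∂x₃ = ∂₂H ∂₁H - ∂₁H ∂₂H + 0 = 0`.
-/

theorem hasDerivAt_quadratic (a b c x : ℝ) :
    HasDerivAt (fun t => a * t ^ 2 + b * t + c) (2 * a * x + b) x :=
  ((((hasDerivAt_pow 2 x).const_mul a).add ((hasDerivAt_id' x).const_mul b)).add_const
    c).congr_deriv (by ring)

/-- Lemma 2, case 1: with `b₁+b₂ = 0`, `2a₁₁+a₂₁ = 0`, `2a₂₂+a₁₂ = 0`,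
`a₁₃ = a₂₃ = 0`, the function `H = b₁x₁x₂ + a₁₁x₁²x₂ − a₂₂x₁x₂² + e₁x₂ − e₂x₁`
is a first integral of the 3D LV system on `ℝ³`. -/
theorem stmt_11 (b1 b2 b3 a11 a12 a13 a21 a22 a23 a31 a32 a33 e1 e2 e3 : ℝ)
    (h1 : b1 + b2 = 0) (h2 : 2 * a11 + a21 = 0) (h3 : 2 * a22 + a12 = 0)
    (h4 : a13 = 0) (h5 : a23 = 0) :
    ∀ x1 x2 x3 : ℝ,
      (x1 * (b1 + a11 * x1 + a12 * x2 + a13 * x3) + e1) *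
        deriv (fun t => b1 * t * x2 + a11 * t ^ 2 * x2 - a22 * t * x2 ^ 2
          + e1 * x2 - e2 * t) x1 +
      (x2 * (b2 + a21 * x1 + a22 * x2 + a23 * x3) + e2) *
        deriv (fun t => b1 * x1 * t + a11 * x1 ^ 2 * t - a22 * x1 * t ^ 2
          + e1 * t - e2 * x1) x2 +
      (x3 * (b3 + a31 * x1 + a32 * x2 + a33 * x3) + e3) *
        deriv (fun t => b1 * x1 * x2 + a11 * x1 ^ 2 * x2 - a22 * x1 * x2 ^ 2
          + e1 * x2 - e2 * x1) x3 = 0 := by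
  intro x1 x2 x3
  have hH₁ : HasDerivAt (fun t => b1 * t * x2 + a11 * t ^ 2 * x2 - a22 * t * x2 ^ 2
      + e1 * x2 - e2 * t) (2 * (a11 * x2) * x1 + (b1 * x2 - a22 * x2 ^ 2 - e2)) x1 := by
    convert hasDerivAt_quadratic (a11 * x2) (b1 * x2 - a22 * x2 ^ 2 - e2) (e1 * x2) x1 using 1
    funext t
    ring
  have hH₂ : HasDerivAt (fun t => b1 * x1 * t + a11 * x1 ^ 2 * t - a22 * x1 * t ^ 2
      + e1 * t - e2 * x1) (2 * (-a22 * x1) * x2 + (b1 * x1 + a11 * x1 ^ 2 + e1)) x2 := by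
    convert hasDerivAt_quadratic (-a22 * x1) (b1 * x1 + a11 * x1 ^ 2 + e1) (-e2 * x1) x2 using 1
    funext t
    ring
  have hf₁ : x1 * (b1 + a11 * x1 + a12 * x2 + a13 * x3) + e1
      = 2 * (-a22 * x1) * x2 + (b1 * x1 + a11 * x1 ^ 2 + e1) := by
    rw [h4]
    linear_combination x1 * x2 * h3
  have hf₂ : x2 * (b2 + a21 * x1 + a22 * x2 + a23 * x3) + e2
      = -(2 * (a11 * x2) * x1 + (b1 * x2 - a22 * x2 ^ 2 - e2)) := by
    rw [h5]
    linear_combination x2 * h1 + x1 * x2 * h2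
  rw [hH₁.deriv, hH₂.deriv, deriv_const, hf₁, hf₂]
  ring
end

section
/- Suppose e₂ = e₃ = 0, b₂ = 0, a₂₁ = 0, a₂₂ = 0, a₂₃ ≠ 0, b₁ + b₃ = 0, and a₁ᵢ + a₃ᵢ = 0 for i = 1, 2, 3. Then the function H(x₁,x₂,x₃) = −a₂₃x₁x₃ + e₁·ln x₂ is a first integral of the three-dimensional Lotka–Volterra system with constant terms on the open set {(x₁,x₂,x₃) ∈ ℝ³ : x₂ > 0}. -/
/-!
Along the vector field, the derivative of `H = -a₂₃x₁x₃ + e₁ ln x₂` is, up to terms that vanish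
under the hypotheses, `-a₂₃x₁x₃` times the sum of the first and third per-capita growth rates
`(b₁ + b₃) + Σᵢ (a₁ᵢ + a₃ᵢ) xᵢ`; the term `e₁ a₂₃ x₃` coming from `ln x₂` cancels the constant term
`e₁` of the first equation.
-/

theorem lotkaVolterra_lieDeriv_eq
    {b1 b2 b3 a11 a12 a13 a21 a22 a23 a31 a32 a33 e1 e2 e3 x1 x2 x3 : ℝ} (hx2 : x2 ≠ 0) :
    (x1 * (b1 + a11 * x1 + a12 * x2 + a13 * x3) + e1) *
        deriv (fun t => -a23 * t * x3 + e1 * Real.log x2) x1 +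
      (x2 * (b2 + a21 * x1 + a22 * x2 + a23 * x3) + e2) *
        deriv (fun t => -a23 * x1 * x3 + e1 * Real.log t) x2 +
      (x3 * (b3 + a31 * x1 + a32 * x2 + a33 * x3) + e3) *
        deriv (fun t => -a23 * x1 * t + e1 * Real.log x2) x3 =
      -a23 * x1 * x3 *
          ((b1 + b3) + (a11 + a31) * x1 + (a12 + a32) * x2 + (a13 + a33) * x3) +
        e1 * (b2 + a21 * x1 + a22 * x2) + e1 * e2 / x2 - a23 * x1 * e3 := by
  simp only [deriv_add_const', deriv_const_add', deriv_mul_const_field', deriv_const_mul_id',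
    deriv_const_mul_field', Real.deriv_log']
  field_simp
  ring

theorem stmt_16_general (b1 b2 b3 a11 a12 a13 a21 a22 a23 a31 a32 a33 e1 e2 e3 : ℝ)
    (he2 : e2 = 0) (he3 : e3 = 0)
    (hb2 : b2 = 0) (h21 : a21 = 0) (h22 : a22 = 0)
    (hb : b1 + b3 = 0)
    (h1 : a11 + a31 = 0) (h2 : a12 + a32 = 0) (h3 : a13 + a33 = 0) :
    ∀ x1 x2 x3 : ℝ, 0 < x2 →
      (x1 * (b1 + a11 * x1 + a12 * x2 + a13 * x3) + e1) *
        deriv (fun t => -a23 * t * x3 + e1 * Real.log x2) x1 +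
      (x2 * (b2 + a21 * x1 + a22 * x2 + a23 * x3) + e2) *
        deriv (fun t => -a23 * x1 * x3 + e1 * Real.log t) x2 +
      (x3 * (b3 + a31 * x1 + a32 * x2 + a33 * x3) + e3) *
        deriv (fun t => -a23 * x1 * t + e1 * Real.log x2) x3 = 0 := by
  intro x1 x2 x3 hx2
  rw [lotkaVolterra_lieDeriv_eq hx2.ne', hb, h1, h2, h3, he2, he3, hb2, h21, h22]
  ring

/-- Lemma 4, case 2: with `e₂ = e₃ = 0` and the stated conditions,
`H = −a₂₃x₁x₃ + e₁ ln x₂` is a first integral of the 3D LV system on `{x₂ > 0}`. -/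
theorem stmt_16 (b1 b2 b3 a11 a12 a13 a21 a22 a23 a31 a32 a33 e1 e2 e3 : ℝ)
    (he2 : e2 = 0) (he3 : e3 = 0)
    (hb2 : b2 = 0) (h21 : a21 = 0) (h22 : a22 = 0) (h23 : a23 ≠ 0)
    (hb : b1 + b3 = 0)
    (h1 : a11 + a31 = 0) (h2 : a12 + a32 = 0) (h3 : a13 + a33 = 0) :
    ∀ x1 x2 x3 : ℝ, 0 < x2 →
      (x1 * (b1 + a11 * x1 + a12 * x2 + a13 * x3) + e1) *
        deriv (fun t => -a23 * t * x3 + e1 * Real.log x2) x1 +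
      (x2 * (b2 + a21 * x1 + a22 * x2 + a23 * x3) + e2) *
        deriv (fun t => -a23 * x1 * x3 + e1 * Real.log t) x2 +
      (x3 * (b3 + a31 * x1 + a32 * x2 + a33 * x3) + e3) *
        deriv (fun t => -a23 * x1 * t + e1 * Real.log x2) x3 = 0 :=
  stmt_16_general b1 b2 b3 a11 a12 a13 a21 a22 a23 a31 a32 a33 e1 e2 e3 he2 he3 hb2 h21 h22 hb h1 h2
    h3
end

section
/- Suppose e₂ = e₃ = 0, a₁₂ = a₁₃ = 0, and suppose l₂, l₃ ∈ ℝ satisfy the linear equations b₂l₂ + b₃l₃ = −b₁, a₂₁l₂ + a₃₁l₃ = −2a₁₁, a₂₂l₂ + a₃₂l₃ = 0 and a₂₃l₂ + a₃₃l₃ = 0. Then the function H(x₁,x₂,x₃) = (b₁ + a₁₁x₁)·x₁·x₂^(l₂)·x₃^(l₃) + e₁·x₂^(l₂)·x₃^(l₃) is a first integral of the three-dimensional Lotka–Volterra system with constant terms on the open set {(x₁,x₂,x₃) ∈ ℝ³ : x₂ > 0, x₃ > 0}. -/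
/-!
Write `F(x₁) = (b₁ + a₁₁x₁)x₁ + e₁` and `M = x₂^{l₂}x₃^{l₃}`, so `H = F·M`. Since `a₁₂ = a₁₃ = 0`
the first component of the field is exactly `F`, and since `e₂ = e₃ = 0` the monomial `M` is
a Darboux function with cofactor `l₂(b₂ + a₂₁x₁ + …) + l₃(b₃ + a₃₁x₁ + …)`, which the linear
conditions on `l₂, l₃` make equal to `-F'(x₁) = -(b₁ + 2a₁₁x₁)`. Hence the derivative of `H`
along the field is `F·F'·M + F·M·(-F') = 0`.
-/

open Real

lemma mul_deriv_const_mul_rpow {x : ℝ} (hx : 0 < x) (c l : ℝ) :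
    x * deriv (fun t => c * t ^ l) x = l * (c * x ^ l) := by
  rw [((hasDerivAt_rpow_const (Or.inl hx.ne')).const_mul c).deriv, rpow_sub_one hx.ne']
  field_simp

lemma deriv_quadratic_mul_const (a b e m x : ℝ) :
    deriv (fun t => ((b + a * t) * t + e) * m) x = (b + 2 * a * x) * m :=
  ((((((hasDerivAt_id' x).const_mul a).const_add b).mul (hasDerivAt_id' x)).add_const e).mul_const
    m).congr_deriv (by ring) |>.deriv

/-- Lemma 4, case 7: with `e₂ = e₃ = 0`, `a₁₂ = a₁₃ = 0` and `l₂, l₃` solving the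
stated linear system, `H = (b₁ + a₁₁x₁)x₁x₂^{l₂}x₃^{l₃} + e₁x₂^{l₂}x₃^{l₃}` is a
first integral of the 3D LV system on `{x₂ > 0, x₃ > 0}`. -/
theorem stmt_17 (b1 b2 b3 a11 a12 a13 a21 a22 a23 a31 a32 a33 e1 e2 e3 l2 l3 : ℝ)
    (he2 : e2 = 0) (he3 : e3 = 0) (h12 : a12 = 0) (h13 : a13 = 0)
    (hl1 : b2 * l2 + b3 * l3 = -b1)
    (hl2 : a21 * l2 + a31 * l3 = -2 * a11)
    (hl3 : a22 * l2 + a32 * l3 = 0)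
    (hl4 : a23 * l2 + a33 * l3 = 0) :
    ∀ x1 x2 x3 : ℝ, 0 < x2 → 0 < x3 →
      (x1 * (b1 + a11 * x1 + a12 * x2 + a13 * x3) + e1) *
        deriv (fun t => (b1 + a11 * t) * t * x2 ^ l2 * x3 ^ l3
          + e1 * x2 ^ l2 * x3 ^ l3) x1 +
      (x2 * (b2 + a21 * x1 + a22 * x2 + a23 * x3) + e2) *
        deriv (fun t => (b1 + a11 * x1) * x1 * t ^ l2 * x3 ^ l3
          + e1 * t ^ l2 * x3 ^ l3) x2 +
      (x3 * (b3 + a31 * x1 + a32 * x2 + a33 * x3) + e3) *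
        deriv (fun t => (b1 + a11 * x1) * x1 * x2 ^ l2 * t ^ l3
          + e1 * x2 ^ l2 * t ^ l3) x3 = 0 := by
  intro x1 x2 x3 hx2 hx3
  subst he2 he3 h12 h13
  set F := (b1 + a11 * x1) * x1 + e1
  set M := x2 ^ l2 * x3 ^ l3
  have hH1 : deriv (fun t => (b1 + a11 * t) * t * x2 ^ l2 * x3 ^ l3
      + e1 * x2 ^ l2 * x3 ^ l3) x1 = (b1 + 2 * a11 * x1) * M := by
    rw [← deriv_quadratic_mul_const a11 b1 e1 M x1]
    congr 1; funext t; ring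
  have hH2 : x2 * deriv (fun t => (b1 + a11 * x1) * x1 * t ^ l2 * x3 ^ l3
      + e1 * t ^ l2 * x3 ^ l3) x2 = l2 * (F * M) := by
    have hfun : (fun t => (b1 + a11 * x1) * x1 * t ^ l2 * x3 ^ l3 + e1 * t ^ l2 * x3 ^ l3)
        = fun t => F * x3 ^ l3 * t ^ l2 := by funext t; ring
    rw [hfun, mul_deriv_const_mul_rpow hx2]; ring
  have hH3 : x3 * deriv (fun t => (b1 + a11 * x1) * x1 * x2 ^ l2 * t ^ l3
      + e1 * x2 ^ l2 * t ^ l3) x3 = l3 * (F * M) := by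
    have hfun : (fun t => (b1 + a11 * x1) * x1 * x2 ^ l2 * t ^ l3 + e1 * x2 ^ l2 * t ^ l3)
        = fun t => F * x2 ^ l2 * t ^ l3 := by funext t; ring
    rw [hfun, mul_deriv_const_mul_rpow hx3]; ring
  have hcofactor : l2 * (b2 + a21 * x1 + a22 * x2 + a23 * x3)
      + l3 * (b3 + a31 * x1 + a32 * x2 + a33 * x3) = -(b1 + 2 * a11 * x1) := by
    linear_combination hl1 + x1 * hl2 + x2 * hl3 + x3 * hl4
  linear_combination F * hH1 + (b2 + a21 * x1 + a22 * x2 + a23 * x3) * hH2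
    + (b3 + a31 * x1 + a32 * x2 + a33 * x3) * hH3 + F * M * hcofactor
end

section
/- Suppose e₁ = e₂ = e₃ = 0, b₁ ≠ 0, a₁₁ = a₁₂ = a₁₃ = 0, and suppose α, β ∈ ℝ satisfy a₂₂α + a₃₂β = 0 and a₂₃α + a₃₃β = 0. Then the function H(x₁,x₂,x₃) = α(b₁·ln x₂ − b₂·ln x₁ − a₂₁x₁) + β(b₁·ln x₃ − b₃·ln x₁ − a₃₁x₁) is a first integral of the three-dimensional Lotka–Volterra system with constant terms on the open positive octant {(x₁,x₂,x₃) : x₁ > 0, x₂ > 0, x₃ > 0}. -/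
/-!
Along the flow, `d/dt log xᵢ = fᵢ / xᵢ`. With `e = 0` and the first row of `A` zero, `log x₁` grows
at the constant rate `b₁`, so `b₁ log xⱼ - bⱼ log x₁ - aⱼ₁ x₁` (for `j = 2, 3`) changes at the rate
`b₁ (aⱼ₂ x₂ + aⱼ₃ x₃)`. The combination with weights `α, β` therefore changes at the rate
`b₁ ((a₂₂α + a₃₂β) x₂ + (a₂₃α + a₃₃β) x₃) = 0`.
-/

open Real

lemma hasDerivAt_const_sub_mul_log_sub_mul (c p q : ℝ) {t : ℝ} (ht : t ≠ 0) :
    HasDerivAt (fun s => c - p * log s - q * s) (-(p * t⁻¹) - q) t :=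
  ((((hasDerivAt_log ht).const_mul p).const_sub c).sub ((hasDerivAt_id' t).const_mul q)).congr_deriv
    (by ring)

lemma hasDerivAt_mul_log_sub_sub (p c d : ℝ) {t : ℝ} (ht : t ≠ 0) :
    HasDerivAt (fun s => p * log s - c - d) (p * t⁻¹) t :=
  (((hasDerivAt_log ht).const_mul p).sub_const c).sub_const d

lemma hasDerivAt_const_mul_add_const_mul {f g : ℝ → ℝ} {f' g' t : ℝ} (α β : ℝ)
    (hf : HasDerivAt f f' t) (hg : HasDerivAt g g' t) :
    HasDerivAt (fun s => α * f s + β * g s) (α * f' + β * g') t :=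
  (hf.const_mul α).add (hg.const_mul β)

lemma lotkaVolterra_logRate_identity (b1 b2 b3 a21 a22 a23 a31 a32 a33 α β x1 x2 x3 : ℝ)
    (hx1 : x1 ≠ 0) (hx2 : x2 ≠ 0) (hx3 : x3 ≠ 0) :
    x1 * b1 * (α * (-(b2 * x1⁻¹) - a21) + β * (-(b3 * x1⁻¹) - a31)) +
      x2 * (b2 + a21 * x1 + a22 * x2 + a23 * x3) * (α * (b1 * x2⁻¹) + β * 0) +
      x3 * (b3 + a31 * x1 + a32 * x2 + a33 * x3) * (α * 0 + β * (b1 * x3⁻¹)) =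
    b1 * ((a22 * α + a32 * β) * x2 + (a23 * α + a33 * β) * x3) := by
  field_simp
  ring

theorem stmt_18_general (b1 b2 b3 a11 a12 a13 a21 a22 a23 a31 a32 a33 e1 e2 e3 α β : ℝ)
    (he1 : e1 = 0) (he2 : e2 = 0) (he3 : e3 = 0)
    (h11 : a11 = 0) (h12 : a12 = 0) (h13 : a13 = 0)
    (hαβ1 : a22 * α + a32 * β = 0) (hαβ2 : a23 * α + a33 * β = 0) :
    ∀ x1 x2 x3 : ℝ, 0 < x1 → 0 < x2 → 0 < x3 →
      (x1 * (b1 + a11 * x1 + a12 * x2 + a13 * x3) + e1) *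
        deriv (fun t => α * (b1 * Real.log x2 - b2 * Real.log t - a21 * t)
          + β * (b1 * Real.log x3 - b3 * Real.log t - a31 * t)) x1 +
      (x2 * (b2 + a21 * x1 + a22 * x2 + a23 * x3) + e2) *
        deriv (fun t => α * (b1 * Real.log t - b2 * Real.log x1 - a21 * x1)
          + β * (b1 * Real.log x3 - b3 * Real.log x1 - a31 * x1)) x2 +
      (x3 * (b3 + a31 * x1 + a32 * x2 + a33 * x3) + e3) *
        deriv (fun t => α * (b1 * Real.log x2 - b2 * Real.log x1 - a21 * x1)
          + β * (b1 * Real.log t - b3 * Real.log x1 - a31 * x1)) x3 = 0 := by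
  intro x1 x2 x3 hx1 hx2 hx3
  subst he1 he2 he3 h11 h12 h13
  have d1 := hasDerivAt_const_mul_add_const_mul α β
    (hasDerivAt_const_sub_mul_log_sub_mul (b1 * log x2) b2 a21 hx1.ne')
    (hasDerivAt_const_sub_mul_log_sub_mul (b1 * log x3) b3 a31 hx1.ne')
  have d2 := hasDerivAt_const_mul_add_const_mul α β
    (hasDerivAt_mul_log_sub_sub b1 (b2 * log x1) (a21 * x1) hx2.ne')
    (hasDerivAt_const x2 (b1 * log x3 - b3 * log x1 - a31 * x1))
  have d3 := hasDerivAt_const_mul_add_const_mul α β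
    (hasDerivAt_const x3 (b1 * log x2 - b2 * log x1 - a21 * x1))
    (hasDerivAt_mul_log_sub_sub b1 (b3 * log x1) (a31 * x1) hx3.ne')
  rw [d1.deriv, d2.deriv, d3.deriv]
  simpa [hαβ1, hαβ2] using lotkaVolterra_logRate_identity b1 b2 b3 a21 a22 a23 a31 a32 a33 α β
    x1 x2 x3 hx1.ne' hx2.ne' hx3.ne'

/-- Lemma 5, case 1: with `e₁ = e₂ = e₃ = 0`, `b₁ ≠ 0`, `a₁₁ = a₁₂ = a₁₃ = 0`
and `α, β` solving `a₂₂α + a₃₂β = 0`, `a₂₃α + a₃₃β = 0`, the function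
`H = α(b₁ ln x₂ − b₂ ln x₁ − a₂₁x₁) + β(b₁ ln x₃ − b₃ ln x₁ − a₃₁x₁)` is a first
integral of the 3D LV system on the positive octant. -/
theorem stmt_18 (b1 b2 b3 a11 a12 a13 a21 a22 a23 a31 a32 a33 e1 e2 e3 α β : ℝ)
    (he1 : e1 = 0) (he2 : e2 = 0) (he3 : e3 = 0)
    (hb1 : b1 ≠ 0) (h11 : a11 = 0) (h12 : a12 = 0) (h13 : a13 = 0)
    (hαβ1 : a22 * α + a32 * β = 0) (hαβ2 : a23 * α + a33 * β = 0) :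
    ∀ x1 x2 x3 : ℝ, 0 < x1 → 0 < x2 → 0 < x3 →
      (x1 * (b1 + a11 * x1 + a12 * x2 + a13 * x3) + e1) *
        deriv (fun t => α * (b1 * Real.log x2 - b2 * Real.log t - a21 * t)
          + β * (b1 * Real.log x3 - b3 * Real.log t - a31 * t)) x1 +
      (x2 * (b2 + a21 * x1 + a22 * x2 + a23 * x3) + e2) *
        deriv (fun t => α * (b1 * Real.log t - b2 * Real.log x1 - a21 * x1)
          + β * (b1 * Real.log x3 - b3 * Real.log x1 - a31 * x1)) x2 +
      (x3 * (b3 + a31 * x1 + a32 * x2 + a33 * x3) + e3) *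
        deriv (fun t => α * (b1 * Real.log x2 - b2 * Real.log x1 - a21 * x1)
          + β * (b1 * Real.log t - b3 * Real.log x1 - a31 * x1)) x3 = 0 :=
  stmt_18_general b1 b2 b3 a11 a12 a13 a21 a22 a23 a31 a32 a33 e1 e2 e3 α β he1 he2 he3 h11 h12 h13
    hαβ1 hαβ2
end

section
/- Suppose e₁ = e₂ = e₃ = 0 and suppose β, γ ∈ ℝ satisfy b₁β + b₂γ = 0 and a₁ᵢβ + a₂ᵢγ = 0 for i = 1, 2, 3 (in particular this holds for suitable nonzero β, γ when (b₁, a₁₁, a₁₂, a₁₃) = λ(b₂, a₂₁, a₂₂, a₂₃) for some λ ∈ ℝ). Then the function H(x₁,x₂,x₃) = x₁^(β)·x₂^(γ) is a first integral of the three-dimensional Lotka–Volterra system with constant terms on the open positive octant {(x₁,x₂,x₃) : x₁ > 0, x₂ > 0, x₃ > 0}. -/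
/-! Along the field, `x₁ ∂ₓ₁ H = β H` and `x₂ ∂ₓ₂ H = γ H` while `∂ₓ₃ H = 0`, so the derivative
of `H` along the flow is `(β (b₁ + Σ a₁ᵢ xᵢ) + γ (b₂ + Σ a₂ᵢ xᵢ)) H`, and the hypotheses say exactly
that this linear form vanishes identically. -/

namespace Real

theorem mul_deriv_rpow_mul_const {x : ℝ} (hx : x ≠ 0) (p c : ℝ) :
    x * deriv (fun t => t ^ p * c) x = p * (x ^ p * c) := by
  rw [((hasDerivAt_rpow_const (Or.inl hx)).mul_const c).deriv, rpow_sub_one hx]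
  field_simp

theorem mul_deriv_const_mul_rpow {x : ℝ} (hx : x ≠ 0) (p c : ℝ) :
    x * deriv (fun t => c * t ^ p) x = p * (c * x ^ p) := by
  simpa only [mul_comm c] using mul_deriv_rpow_mul_const hx p c

end Real

/-- Lemma 5, case 5: with `e₁ = e₂ = e₃ = 0` and `β, γ` solving
`b₁β + b₂γ = 0` and `a₁ᵢβ + a₂ᵢγ = 0` for `i = 1,2,3`, the function
`H = x₁^β x₂^γ` is a first integral of the 3D LV system on the positive octant. -/
theorem stmt_19 (b1 b2 b3 a11 a12 a13 a21 a22 a23 a31 a32 a33 e1 e2 e3 β γ : ℝ)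
    (he1 : e1 = 0) (he2 : e2 = 0) (he3 : e3 = 0)
    (hb : b1 * β + b2 * γ = 0)
    (h1 : a11 * β + a21 * γ = 0)
    (h2 : a12 * β + a22 * γ = 0)
    (h3 : a13 * β + a23 * γ = 0) :
    ∀ x1 x2 x3 : ℝ, 0 < x1 → 0 < x2 → 0 < x3 →
      (x1 * (b1 + a11 * x1 + a12 * x2 + a13 * x3) + e1) *
        deriv (fun t => t ^ β * x2 ^ γ) x1 +
      (x2 * (b2 + a21 * x1 + a22 * x2 + a23 * x3) + e2) *
        deriv (fun t => x1 ^ β * t ^ γ) x2 +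
      (x3 * (b3 + a31 * x1 + a32 * x2 + a33 * x3) + e3) *
        deriv (fun t => x1 ^ β * x2 ^ γ) x3 = 0 := by
  intro x1 x2 x3 hx1 hx2 _
  subst he1 he2 he3
  have hD1 := Real.mul_deriv_rpow_mul_const hx1.ne' β (x2 ^ γ)
  have hD2 := Real.mul_deriv_const_mul_rpow hx2.ne' γ (x1 ^ β)
  have hlin : β * (b1 + a11 * x1 + a12 * x2 + a13 * x3)
      + γ * (b2 + a21 * x1 + a22 * x2 + a23 * x3) = 0 := by
    linear_combination hb + x1 * h1 + x2 * h2 + x3 * h3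
  rw [deriv_const]
  linear_combination (b1 + a11 * x1 + a12 * x2 + a13 * x3) * hD1
    + (b2 + a21 * x1 + a22 * x2 + a23 * x3) * hD2 + x1 ^ β * x2 ^ γ * hlin
end
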